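/- Honest-verifier zero-knowledge of the Σ-protocol for correct blinding: for every challenge c ∈ ZMod q, the pushforward of uniform((ZMod q)ⁿ × ZMod q) under the honest prover map (B, b) ↦ ((∏ᵢ Vᵢ^{Bᵢ.val})·g^{b.val}, B + c·S, b + c·ρ) equals the pushforward of uniform((ZMod q)ⁿ × ZMod q) under the simulator map (Y, z) ↦ ((∏ᵢ Vᵢ^{Yᵢ.val})·g^{z.val}·α^{−(c.val)}, Y, z). In particular, simulated transcripts, computed without knowledge of the witness (S, ρ), are distributed identically to honest transcripts. -/

import Mathlib

/-!
Since every element of `G` has order dividing `q`, the blinding map `(B, b) ↦ (∏ i, V i ^ B i) * g ^ b`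
is a homomorphism from `(ZMod q)ⁿ × ZMod q` to `G`. Hence the honest prover map is the simulator
map precomposed with the translation by `c • (S, ρ)`, and translations preserve the uniform
distribution.
-/

open Finset

theorem PMF.map_uniformOfFintype_equiv {α β : Type*} [Fintype α] [Nonempty α] [Fintype β]
    [Nonempty β] (e : α ≃ β) :
    (PMF.uniformOfFintype α).map e = PMF.uniformOfFintype β := by
  ext b
  rw [PMF.map_apply, tsum_eq_single (e.symm b)]
  · simp [Fintype.card_congr e]
  · intro a ha
    rw [if_neg]
    rintro rfl
    exact ha (e.symm_apply_apply a).symm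

theorem PMF.map_uniformOfFintype_comp_equiv {α γ : Type*} [Fintype α] [Nonempty α]
    (f : α → γ) (e : α ≃ α) :
    (PMF.uniformOfFintype α).map (f ∘ e) = (PMF.uniformOfFintype α).map f := by
  rw [← PMF.map_comp, PMF.map_uniformOfFintype_equiv]

section ExponentDividing

variable {M : Type*} [Monoid M] {q : ℕ} [NeZero q] {x : M}

theorem pow_val_eq_pow_of_natCast_eq (hx : x ^ q = 1) {a : ZMod q} {k : ℕ}
    (h : (k : ZMod q) = a) : x ^ a.val = x ^ k :=
  pow_eq_pow_of_modEq ((ZMod.natCast_eq_natCast_iff _ _ _).1 (by rw [ZMod.natCast_zmod_val, h])) hx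

theorem pow_val_add (hx : x ^ q = 1) (a b : ZMod q) :
    x ^ (a + b).val = x ^ a.val * x ^ b.val := by
  rw [← pow_add]
  exact pow_val_eq_pow_of_natCast_eq hx (by simp)

theorem pow_val_mul (hx : x ^ q = 1) (a b : ZMod q) :
    x ^ (a * b).val = (x ^ a.val) ^ b.val := by
  rw [← pow_mul]
  exact pow_val_eq_pow_of_natCast_eq hx (by simp)

end ExponentDividing

section BlindingCommitment

variable {M : Type*} [CommMonoid M] {q : ℕ} [NeZero q] {ι : Type*} [Fintype ι]

def blindingCommit (V : ι → M) (g : M) (p : (ι → ZMod q) × ZMod q) : M :=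
  (∏ i, V i ^ (p.1 i).val) * g ^ p.2.val

variable (hM : ∀ y : M, y ^ q = 1) (V : ι → M) (g : M)
include hM

theorem blindingCommit_add (p w : (ι → ZMod q) × ZMod q) :
    blindingCommit V g (p + w) = blindingCommit V g p * blindingCommit V g w := by
  simp only [blindingCommit, Prod.fst_add, Prod.snd_add, Pi.add_apply, pow_val_add (hM _),
    prod_mul_distrib]
  exact mul_mul_mul_comm _ _ _ _

theorem blindingCommit_smul (c : ZMod q) (w : (ι → ZMod q) × ZMod q) :
    blindingCommit V g (c • w) = blindingCommit V g w ^ c.val := by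
  simp only [blindingCommit, Prod.smul_fst, Prod.smul_snd, Pi.smul_apply, smul_eq_mul,
    mul_comm c, pow_val_mul (hM _), prod_pow, mul_pow]

end BlindingCommitment

/-- Honest-verifier zero-knowledge of the Σ-protocol for correct blinding. -/
theorem blinding_sigma_hvzk
    {q : ℕ} [Fact q.Prime]
    {G : Type*} [CommGroup G] (hG : ∀ y : G, y ^ q = 1)
    (g : G) {n : ℕ} (V : Fin n → G)
    (S : Fin n → ZMod q) (ρ : ZMod q) (α : G)
    (hα : α = (∏ i, V i ^ (S i).val) * g ^ ρ.val)
    (c : ZMod q) :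
    (PMF.uniformOfFintype ((Fin n → ZMod q) × ZMod q)).map
        (fun Bb => ((∏ i, V i ^ (Bb.1 i).val) * g ^ Bb.2.val,
                    fun i => Bb.1 i + c * S i, Bb.2 + c * ρ))
      = (PMF.uniformOfFintype ((Fin n → ZMod q) × ZMod q)).map
        (fun Yz => ((∏ i, V i ^ (Yz.1 i).val) * g ^ Yz.2.val * α ^ (-(c.val : ℤ)),
                    Yz.1, Yz.2)) := by
  have hα' : α = blindingCommit V g (S, ρ) := hα
  have hcommit (p : (Fin n → ZMod q) × ZMod q) :
      blindingCommit V g (p + c • (S, ρ)) * α ^ (-(c.val : ℤ)) = blindingCommit V g p := by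
    rw [blindingCommit_add hG, blindingCommit_smul hG, ← hα', zpow_neg, zpow_natCast,
      mul_inv_cancel_right]
  refine .trans ?_ (PMF.map_uniformOfFintype_comp_equiv _ (Equiv.addRight (c • (S, ρ))))
  congr 1
  funext p
  exact Prod.ext (hcommit p).symm rfl
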